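/- arXiv:2112.13484 — 3 statements merged into one kernel-verified Lean document; each statement's English description precedes it below -/
import Mathlib

section
/- Consider ẋ = F(t)x with F piecewise continuous and ‖F(t)‖ ≤ α e^{−λt} for constants α, λ > 0. Then for every initial condition x(0), the solution x(t) converges to a limit x* ∈ ℝⁿ as t → ∞, and moreover ‖x(t) − x*‖ decays exponentially with rate λ, i.e., there exists C > 0 with ‖x(t) − x*‖ ≤ C e^{−λt} for all t ≥ 0. -/
/-!
Since `⟪x, ẋ⟫ ≤ ‖F t‖ ‖x‖² ≤ β' ‖x‖²` for `β t = -(α / λ) e^{-λt}`, the function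
`e^{-2β} ‖x‖²` is nonincreasing, so `‖x t‖ ≤ e^{α/λ} ‖x 0‖ =: M`. Then `‖ẋ t‖ ≤ α M e^{-λt} = B' t`
for `B t = -(α M / λ) e^{-λt}`, and the mean value inequality `‖x s - x t‖ ≤ B s - B t` makes `x`
Cauchy at infinity, with `‖x t - x*‖ ≤ 0 - B t = (α M / λ) e^{-λt}`.
-/

open Filter Real Set Topology

section

variable {E : Type*} [NormedAddCommGroup E]

theorem norm_le_exp_mul_of_norm_deriv_le_mul [InnerProductSpace ℝ E] {x x' : ℝ → E}
    {β K : ℝ → ℝ} {a : ℝ} (hx : ∀ t ≥ a, HasDerivAt x (x' t) t)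
    (hβ : ∀ t ≥ a, HasDerivAt β (K t) t) (hbound : ∀ t ≥ a, ‖x' t‖ ≤ K t * ‖x t‖) :
    ∀ t ≥ a, ‖x t‖ ≤ exp (β t - β a) * ‖x a‖ := by
  set h : ℝ → ℝ := fun t => exp (-2 * β t) * ‖x t‖ ^ 2
  set h' : ℝ → ℝ := fun t =>
    exp (-2 * β t) * (-2 * K t) * ‖x t‖ ^ 2 + exp (-2 * β t) * (2 * inner ℝ (x t) (x' t))
  have hderiv : ∀ t ≥ a, HasDerivAt h (h' t) t :=
    fun t ht => (((hβ t ht).const_mul (-2)).exp).mul (hx t ht).norm_sq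
  have hanti : AntitoneOn h (Ici a) := by
    refine antitoneOn_of_hasDerivWithinAt_nonpos (f' := h') (convex_Ici a)
      (fun t ht => (hderiv t ht).continuousAt.continuousWithinAt)
      (fun t ht => ?_) (fun t ht => ?_)
    all_goals rw [interior_Ici] at ht
    · exact (hderiv t (le_of_lt ht)).hasDerivWithinAt
    · have hinner : inner ℝ (x t) (x' t) ≤ K t * ‖x t‖ ^ 2 :=
        calc inner ℝ (x t) (x' t) ≤ ‖x t‖ * ‖x' t‖ := real_inner_le_norm _ _
          _ ≤ ‖x t‖ * (K t * ‖x t‖) := by gcongr; exact hbound t ht.le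
          _ = K t * ‖x t‖ ^ 2 := by ring
      have := exp_pos (-2 * β t)
      simp only [h']
      nlinarith
  intro t ht
  rw [← pow_le_pow_iff_left₀ (norm_nonneg _) (by positivity) two_ne_zero]
  calc ‖x t‖ ^ 2 = exp (2 * β t) * h t := by
        rw [← mul_assoc, ← exp_add]; simp
    _ ≤ exp (2 * β t) * h a := by gcongr; exact hanti self_mem_Ici ht ht
    _ = (exp (β t - β a) * ‖x a‖) ^ 2 := by
        rw [mul_pow, ← exp_nat_mul, ← mul_assoc, ← exp_add]; ring_nf

theorem norm_sub_le_sub_of_norm_deriv_le [NormedSpace ℝ E] {x x' : ℝ → E} {B B' : ℝ → ℝ}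
    {a b : ℝ} (hab : a ≤ b) (hx : ∀ t ∈ Icc a b, HasDerivAt x (x' t) t)
    (hB : ∀ t ∈ Icc a b, HasDerivAt B (B' t) t) (hbound : ∀ t ∈ Ico a b, ‖x' t‖ ≤ B' t) :
    ‖x b - x a‖ ≤ B b - B a :=
  image_norm_le_of_norm_deriv_right_le_deriv_boundary' (f := fun t => x t - x a)
    (B := fun t => B t - B a)
    (fun t ht => ((hx t ht).continuousAt.sub continuousAt_const).continuousWithinAt)
    (fun t ht => ((hx t (Ico_subset_Icc_self ht)).sub_const (x a)).hasDerivWithinAt)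
    (by simp)
    (fun t ht => ((hB t ht).continuousAt.sub continuousAt_const).continuousWithinAt)
    (fun t ht => ((hB t (Ico_subset_Icc_self ht)).sub_const (B a)).hasDerivWithinAt)
    hbound ⟨hab, le_rfl⟩

theorem exists_tendsto_norm_sub_le_of_norm_deriv_le [NormedSpace ℝ E] [CompleteSpace E]
    {x x' : ℝ → E} {B B' : ℝ → ℝ} {a L : ℝ} (hx : ∀ t ≥ a, HasDerivAt x (x' t) t)
    (hB : ∀ t ≥ a, HasDerivAt B (B' t) t) (hbound : ∀ t ≥ a, ‖x' t‖ ≤ B' t)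
    (hBL : Tendsto B atTop (𝓝 L)) :
    ∃ xlim, Tendsto x atTop (𝓝 xlim) ∧ ∀ t ≥ a, ‖x t - xlim‖ ≤ L - B t := by
  have hincr : ∀ t s, a ≤ t → t ≤ s → ‖x s - x t‖ ≤ B s - B t := fun t s ht hts =>
    norm_sub_le_sub_of_norm_deriv_le hts (fun u hu => hx u (ht.trans hu.1))
      (fun u hu => hB u (ht.trans hu.1)) (fun u hu => hbound u (ht.trans hu.1))
  have hcauchy : CauchySeq x := by
    refine Metric.cauchySeq_iff'.2 fun ε hε => ?_
    obtain ⟨N, hN⟩ := Metric.tendsto_atTop.1 hBL (ε / 2) (half_pos hε)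
    refine ⟨max N a, fun s hs => ?_⟩
    have h₁ := hN s (le_of_max_le_left hs)
    have h₂ := hN (max N a) (le_max_left _ _)
    rw [Real.dist_eq] at h₁ h₂
    rw [dist_eq_norm]
    have := hincr _ _ (le_max_right _ _) hs
    linarith [abs_lt.1 h₁, abs_lt.1 h₂]
  obtain ⟨xlim, hlim⟩ := cauchySeq_tendsto_of_complete hcauchy
  refine ⟨xlim, hlim, fun t ht => ?_⟩
  rw [norm_sub_rev]
  exact le_of_tendsto_of_tendsto (hlim.sub_const (x t)).norm (hBL.sub_const (B t))
    ((eventually_ge_atTop t).mono fun s hs => hincr t s ht hs)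

end

theorem hasDerivAt_neg_div_mul_exp_neg_mul (c : ℝ) {lam : ℝ} (hlam : lam ≠ 0) (t : ℝ) :
    HasDerivAt (fun s => -(c / lam) * exp (-lam * s)) (c * exp (-lam * t)) t := by
  refine ((((hasDerivAt_id' t).const_mul (-lam)).exp).const_mul (-(c / lam))).congr_deriv ?_
  field_simp

theorem tendsto_mul_exp_neg_mul_atTop (c : ℝ) {lam : ℝ} (hlam : 0 < lam) :
    Tendsto (fun s => c * exp (-lam * s)) atTop (𝓝 0) := by
  simpa using (tendsto_exp_atBot.comp
    (tendsto_id.const_mul_atTop_of_neg (neg_neg_of_pos hlam))).const_mul c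

/-- If ẋ = F(t)x with ‖F(t)‖ ≤ α e^{−λt}, then x(t) converges to some
x* as t → ∞, and ‖x(t) − x*‖ ≤ C e^{−λt} for some C > 0. -/
theorem stmt1 {n : ℕ} (F : ℝ → Matrix (Fin n) (Fin n) ℝ)
    (x : ℝ → EuclideanSpace ℝ (Fin n))
    (α lam : ℝ) (hα : 0 < α) (hlam : 0 < lam)
    (hF : ∀ t ≥ (0:ℝ), ‖Matrix.toEuclideanCLM (𝕜 := ℝ) (F t)‖ ≤ α * Real.exp (-lam * t))
    (hx : ∀ t ≥ (0:ℝ), HasDerivAt x (Matrix.toEuclideanCLM (𝕜 := ℝ) (F t) (x t)) t) :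
    ∃ xstar : EuclideanSpace ℝ (Fin n),
      Tendsto x atTop (nhds xstar) ∧
      ∃ C > (0:ℝ), ∀ t ≥ (0:ℝ), ‖x t - xstar‖ ≤ C * Real.exp (-lam * t) := by
  have hprim := fun c => hasDerivAt_neg_div_mul_exp_neg_mul c hlam.ne'
  have hvel : ∀ t ≥ (0:ℝ),
      ‖Matrix.toEuclideanCLM (𝕜 := ℝ) (F t) (x t)‖ ≤ α * exp (-lam * t) * ‖x t‖ :=
    fun t ht => ((Matrix.toEuclideanCLM (𝕜 := ℝ) (F t)).le_opNorm _).trans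
      (by gcongr; exact hF t ht)
  set M := exp (α / lam) * ‖x 0‖ with hM
  have hbdd : ∀ t ≥ (0:ℝ), ‖x t‖ ≤ M := fun t ht => by
    refine (norm_le_exp_mul_of_norm_deriv_le_mul hx (fun t _ => hprim α t) hvel t ht).trans ?_
    rw [hM]
    gcongr
    have : 0 ≤ α / lam * exp (-lam * t) := by positivity
    simp only [mul_zero, exp_zero]
    linarith
  obtain ⟨xstar, hlim, htail⟩ := exists_tendsto_norm_sub_le_of_norm_deriv_le hx
    (fun t _ => hprim (α * M) t)
    (fun t ht => (hvel t ht).trans (by rw [mul_right_comm]; gcongr; exact hbdd t ht))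
    (by simpa using tendsto_mul_exp_neg_mul_atTop (-(α * M / lam)) hlam)
  refine ⟨xstar, hlim, α * M / lam + 1, by positivity, fun t ht => (htail t ht).trans ?_⟩
  nlinarith [exp_pos (-lam * t)]
end

section
/- Let Φ ∈ ℝʳˣʳ and M ∈ ℝʳˣʳ have disjoint spectra, let Ψ ∈ ℝ^{1×r}, N ∈ ℝʳ, with (Ψ, Φ) observable and (M, N) controllable. Then the unique solution T of the Sylvester equation TΦ − MT = NΨ is nonsingular. -/
/-!
Let `p = ∑ aₖ Xᵏ` be the characteristic polynomial of `Φ`. Iterating the Sylvester equation gives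
`T p(Φ) - p(M) T = ∑_{u,v} a_{u+v+1} Mᵘ N Ψ Φᵛ = C H O`, where `C` is the controllability matrix
of `(M, N)`, `O` the observability matrix of `(Ψ, Φ)` and `H = (a_{u+v+1})` a Hankel matrix, which
is anti-triangular with ones on the antidiagonal because `p` is monic. By Cayley–Hamilton
`p(Φ) = 0`, so `-p(M) T = C H O` is invertible, and therefore so is `T`.
-/

open Matrix Polynomial Finset

theorem coeff_divX_iterate {R : Type*} [Semiring R] (p : R[X]) (k n : ℕ) :
    (divX^[k] p).coeff n = p.coeff (n + k) := by
  induction k generalizing p with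
  | zero => rfl
  | succ k ih => rw [Function.iterate_succ_apply, ih, coeff_divX, add_assoc]

theorem natDegree_divX_iterate {R : Type*} [Semiring R] (p : R[X]) (k : ℕ) :
    (divX^[k] p).natDegree = p.natDegree - k := by
  induction k generalizing p with
  | zero => rfl
  | succ k ih => rw [Function.iterate_succ_apply, ih, natDegree_divX_eq_natDegree_tsub_one]; omega

section Sylvester
variable {R A : Type*} [CommRing R] [Ring A] [Algebra R A] {Φ M T G : A}

theorem aeval_eq_mul_aeval_divX_add (x : A) (p : R[X]) :
    aeval x p = x * aeval x p.divX + algebraMap R A (p.coeff 0) := by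
  conv_lhs => rw [← X_mul_divX_add p]
  rw [map_add, map_mul, aeval_X, aeval_C]

/-- The right-hand side is the divided difference `(p(X) - p(Y)) / (X - Y)` evaluated at
`X = M`, `Y = Φ`, with `G` inserted between the two factors. -/
theorem mul_aeval_sub_aeval_mul_eq_sum (hT : T * Φ - M * T = G) {d : ℕ} {p : R[X]}
    (hp : p.natDegree ≤ d) :
    T * aeval Φ p - aeval M p * T = ∑ u ∈ range d, M ^ u * G * aeval Φ (divX^[u + 1] p) := by
  induction d generalizing p with
  | zero =>
    rw [eq_C_of_natDegree_le_zero hp]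
    simp only [aeval_C, Algebra.commutes, sub_self, sum_range_zero]
  | succ d ih =>
    have hq : p.divX.natDegree ≤ d := by
      rw [natDegree_divX_eq_natDegree_tsub_one]; omega
    calc T * aeval Φ p - aeval M p * T
        = G * aeval Φ p.divX + M * (T * aeval Φ p.divX - aeval M p.divX * T) := by
          rw [aeval_eq_mul_aeval_divX_add Φ, aeval_eq_mul_aeval_divX_add M, ← hT, mul_add, add_mul, Algebra.commutes]; noncomm_ring
      _ = _ := by
          rw [ih hq, sum_range_succ', mul_sum, add_comm]
          simp only [Function.iterate_succ_apply, pow_succ', pow_zero, one_mul,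
            Function.iterate_zero_apply, mul_assoc]

end Sylvester

section ControlMatrices
variable {R : Type*} [CommRing R] {n m : Type*} [Fintype n] [DecidableEq n]

def ctrbMatrix (M : Matrix n n R) (N : Matrix n (Fin 1) R) (d : ℕ) : Matrix n (Fin d) R :=
  of fun i j => (M ^ (j : ℕ) * N) i 0

def obsvMatrix (Ψ : Matrix (Fin 1) n R) (Φ : Matrix n n R) (d : ℕ) : Matrix (Fin d) n R :=
  of fun i j => (Ψ * Φ ^ (i : ℕ)) 0 j

def hankelMatrix (p : R[X]) (d : ℕ) : Matrix (Fin d) (Fin d) R :=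
  of fun u v => p.coeff (u + v + 1)

theorem ctrbMatrix_mul (M : Matrix n n R) (N : Matrix n (Fin 1) R) {d : ℕ}
    (X : Matrix (Fin d) m R) :
    ctrbMatrix M N d * X = ∑ u : Fin d, M ^ (u : ℕ) * N * replicateRow (Fin 1) (X u) := by
  ext i j
  simp [ctrbMatrix, mul_apply, Matrix.sum_apply]

theorem hankelMatrix_mul_obsvMatrix (Ψ : Matrix (Fin 1) n R) (Φ : Matrix n n R) {d : ℕ}
    {p : R[X]} (hp : p.natDegree ≤ d) :
    hankelMatrix p d * obsvMatrix Ψ Φ d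
      = of fun (u : Fin d) j => (Ψ * aeval Φ (divX^[u + 1] p)) 0 j := by
  ext u j
  have hdeg : (divX^[u + 1] p).natDegree < d := by
    rw [natDegree_divX_iterate]; omega
  rw [of_apply, aeval_eq_sum_range' hdeg, ← Fin.sum_univ_eq_sum_range]
  simp only [hankelMatrix, obsvMatrix, mul_apply, of_apply, Matrix.sum_apply, Matrix.smul_apply,
    smul_eq_mul, coeff_divX_iterate, Finset.mul_sum]
  rw [Finset.sum_comm]
  refine sum_congr rfl fun v _ => sum_congr rfl fun k _ => ?_
  rw [add_comm (k : ℕ), add_right_comm]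
  ring

theorem ctrbMatrix_mul_hankelMatrix_mul_obsvMatrix (M Φ : Matrix n n R) (N : Matrix n (Fin 1) R)
    (Ψ : Matrix (Fin 1) n R) {d : ℕ} {p : R[X]} (hp : p.natDegree ≤ d) :
    ctrbMatrix M N d * hankelMatrix p d * obsvMatrix Ψ Φ d
      = ∑ u ∈ range d, M ^ u * (N * Ψ) * aeval Φ (divX^[u + 1] p) := by
  rw [Matrix.mul_assoc, hankelMatrix_mul_obsvMatrix Ψ Φ hp, ctrbMatrix_mul,
    ← Fin.sum_univ_eq_sum_range (fun u => M ^ u * (N * Ψ) * aeval Φ (divX^[u + 1] p))]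
  refine sum_congr rfl fun u _ => ?_
  have hrow : replicateRow (Fin 1) ((of fun (u : Fin d) j => (Ψ * aeval Φ (divX^[u + 1] p)) 0 j) u)
      = Ψ * aeval Φ (divX^[u + 1] p) := by
    ext i j
    rw [Subsingleton.elim i 0]
    rfl
  rw [hrow, Matrix.mul_assoc, Matrix.mul_assoc, Matrix.mul_assoc]

theorem isUnit_hankelMatrix {p : R[X]} {d : ℕ} (hp : p.Monic) (hd : p.natDegree = d) :
    IsUnit (hankelMatrix p d) := by
  subst hd
  set H := (hankelMatrix p p.natDegree).submatrix id Fin.revPerm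
  have hH : H.IsUpperTriangular := by
    intro u v (huv : (v : ℕ) < u)
    change p.coeff (u + (Fin.rev v : ℕ) + 1) = 0
    refine coeff_eq_zero_of_natDegree_lt ?_
    rw [Fin.val_rev]
    omega
  have hdiag : ∀ u, H u u = 1 := by
    intro u
    change p.coeff (u + (Fin.rev u : ℕ) + 1) = 1
    rw [Fin.val_rev, ← hp.coeff_natDegree]
    congr 1
    omega
  rw [← isUnit_submatrix_equiv (Equiv.refl _) Fin.revPerm, isUnit_iff_isUnit_det]
  change IsUnit H.det
  rw [det_of_isUpperTriangular hH, prod_eq_one fun u _ => hdiag u]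
  exact isUnit_one

end ControlMatrices

theorem isUnit_of_rank_eq_card {K n : Type*} [Field K] [Fintype n] [DecidableEq n]
    {A : Matrix n n K} (h : A.rank = Fintype.card n) : IsUnit A := by
  rw [← Matrix.mulVec_surjective_iff_isUnit]
  change Function.Surjective A.mulVecLin
  rw [← LinearMap.range_eq_top]
  apply Submodule.eq_top_of_finrank_eq
  rw [← Matrix.rank, h, Module.finrank_fintype_fun_eq_card]

theorem stmt11_general {r : ℕ} (Φ M : Matrix (Fin r) (Fin r) ℝ)
    (Ψ : Matrix (Fin 1) (Fin r) ℝ) (N : Matrix (Fin r) (Fin 1) ℝ)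
    (hobs : (Matrix.of (fun i j : Fin r => (Ψ * Φ ^ (i : ℕ)) 0 j)).rank = r)
    (hctrb : (Matrix.of (fun i j : Fin r => (M ^ (j : ℕ) * N) i 0)).rank = r)
    (T : Matrix (Fin r) (Fin r) ℝ)
    (hT : T * Φ - M * T = N * Ψ) :
    IsUnit T := by
  have hdeg : Φ.charpoly.natDegree = r := by
    rw [charpoly_natDegree_eq_dim, Fintype.card_fin]
  have hfactor : -(aeval M Φ.charpoly * T)
      = ctrbMatrix M N r * hankelMatrix Φ.charpoly r * obsvMatrix Ψ Φ r := by
    rw [ctrbMatrix_mul_hankelMatrix_mul_obsvMatrix M Φ N Ψ hdeg.le,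
      ← mul_aeval_sub_aeval_mul_eq_sum hT hdeg.le, aeval_self_charpoly, mul_zero, zero_sub]
  have hC : IsUnit (ctrbMatrix M N r) := isUnit_of_rank_eq_card (by rwa [Fintype.card_fin])
  have hO : IsUnit (obsvMatrix Ψ Φ r) := isUnit_of_rank_eq_card (by rwa [Fintype.card_fin])
  have hH : IsUnit (hankelMatrix Φ.charpoly r) := isUnit_hankelMatrix (charpoly_monic Φ) hdeg
  have hPT : IsUnit (aeval M Φ.charpoly * T) := by
    rw [← IsUnit.neg_iff, hfactor]
    exact (hC.mul hH).mul hO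
  exact isUnit_of_mul_isUnit_right hPT

/-- If Φ and M have disjoint spectra, (Ψ,Φ) is observable and (M,N) is
controllable, then the (unique) solution T of TΦ − MT = NΨ is nonsingular. -/
theorem stmt11 {r : ℕ} (Φ M : Matrix (Fin r) (Fin r) ℝ)
    (Ψ : Matrix (Fin 1) (Fin r) ℝ) (N : Matrix (Fin r) (Fin 1) ℝ)
    (hspec : ∀ μ : ℂ, ¬((Matrix.charpoly (Φ.map (Complex.ofReal ·))).IsRoot μ ∧
      (Matrix.charpoly (M.map (Complex.ofReal ·))).IsRoot μ))
    (hobs : (Matrix.of (fun i j : Fin r => (Ψ * Φ ^ (i : ℕ)) 0 j)).rank = r)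
    (hctrb : (Matrix.of (fun i j : Fin r => (M ^ (j : ℕ) * N) i 0)).rank = r)
    (T : Matrix (Fin r) (Fin r) ℝ)
    (hT : T * Φ - M * T = N * Ψ) :
    IsUnit T :=
  stmt11_general Φ M Ψ N hobs hctrb T hT
end

section
/- Let M : [0,∞) → ℝⁿˣⁿ be differentiable with M(t) symmetric positive definite and k_m I ≤ M(t) ≤ k_M I, let C : [0,∞) → ℝⁿˣⁿ be such that Ṁ(t) − 2C(t) is skew-symmetric for all t. Suppose s : [0,∞) → ℝⁿ satisfies M(t)ṡ = −C(t)s − Ks + B ξ̂(t) − ρ(t) ω̃(t), ω̃̇ = Λ⁻¹ ρ(t)ᵀ s, and ξ̂̇ = M₀ ξ̂ with M₀ Hurwitz, where K ≻ 0, Λ ≻ 0 diagonal, and ρ bounded. Then with V = ε ξ̂ᵀQ ξ̂ + ½(sᵀ M(t) s + ω̃ᵀ Λ ω̃), where Q ≻ 0 solves Q M₀ + M₀ᵀ Q = −I and ε ≥ ‖B‖²/λ_min(K), the derivative satisfies V̇ ≤ −(ε/2)‖ξ̂‖² − ½ sᵀ K s ≤ 0; hence s, ξ̂, ω̃ are bounded.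 -/
open Matrix

attribute [local instance] Matrix.frobeniusNormedAddCommGroup Matrix.frobeniusNormedSpace

/-!
Along trajectories, `ξᵀQξ` decreases at rate `‖ξ‖²` by the Lyapunov equation, the skew-symmetry
of `Ṁ - 2C` makes `d/dt (½ sᵀMs) = sᵀ(-Ks + Bξ - ρω̃)`, and the adaptation law is chosen so that
`d/dt (½ ω̃ᵀΛω̃) = sᵀρω̃` cancels the last term. What is left, `-ε‖ξ‖² - sᵀKs + sᵀBξ`, is at most
`-(ε/2)‖ξ‖² - ½ sᵀKs` by Young's inequality and `ε λ_min(K) ≥ ‖B‖²`. Hence `V` is nonincreasing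
and bounds `sᵀs` and `ω̃ᵀω̃`, while the nonincreasing `ξᵀQξ` bounds `ξᵀξ`.
-/

section

variable {ι κ ν : Type*} [Fintype ι] [Fintype κ] [Fintype ν]

theorem Matrix.dotProduct_self_nonneg {R : Type*} [Ring R] [LinearOrder R] [IsStrictOrderedRing R]
    (v : ι → R) : 0 ≤ v ⬝ᵥ v :=
  Fintype.sum_nonneg fun i => mul_self_nonneg (v i)

theorem Matrix.IsSymm.dotProduct_mulVec_comm {R : Type*} [CommSemiring R] {A : Matrix ι ι R}
    (hA : A.IsSymm) (x y : ι → R) : x ⬝ᵥ (A *ᵥ y) = y ⬝ᵥ (A *ᵥ x) := by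
  simpa [hA.eq] using dotProduct_transpose_mulVec A x y

theorem Matrix.dotProduct_mulVec_self_eq_zero_of_transpose_eq_neg {A : Matrix ι ι ℝ}
    (hA : Aᵀ = -A) (x : ι → ℝ) : x ⬝ᵥ (A *ᵥ x) = 0 := by
  have h := dotProduct_transpose_mulVec A x x
  rw [hA, neg_mulVec, dotProduct_neg] at h
  linarith

theorem Matrix.two_mul_dotProduct_le (x y : ι → ℝ) {c : ℝ} (hc : 0 < c) :
    2 * (x ⬝ᵥ y) ≤ c * (x ⬝ᵥ x) + (y ⬝ᵥ y) / c := by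
  have h := dotProduct_self_nonneg (c • x - y)
  simp only [sub_dotProduct, dotProduct_sub, smul_dotProduct, dotProduct_smul, smul_eq_mul,
    dotProduct_comm y x] at h
  refine le_of_mul_le_mul_left ?_ hc
  rw [mul_add, mul_div_cancel₀ _ hc.ne']
  linarith

theorem norm_le_sqrt_dotProduct_self (v : ι → ℝ) : ‖v‖ ≤ √(v ⬝ᵥ v) := by
  refine (pi_norm_le_iff_of_nonneg (Real.sqrt_nonneg _)).2 fun i => ?_
  rw [Real.norm_eq_abs, ← Real.sqrt_sq_eq_abs]
  exact Real.sqrt_le_sqrt (Finset.single_le_sum (f := fun j => v j * v j)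
    (fun j _ => mul_self_nonneg (v j)) (Finset.mem_univ i) |>.trans_eq' (sq (v i)).symm)

theorem HasDerivAt.dotProduct_mulVec {u : ℝ → ι → ℝ} {A : ℝ → Matrix ι κ ℝ} {v : ℝ → κ → ℝ}
    {u' : ι → ℝ} {A' : Matrix ι κ ℝ} {v' : κ → ℝ} {t : ℝ}
    (hu : HasDerivAt u u' t) (hA : HasDerivAt A A' t) (hv : HasDerivAt v v' t) :
    HasDerivAt (fun τ => u τ ⬝ᵥ (A τ *ᵥ v τ))
      (u' ⬝ᵥ (A t *ᵥ v t) + u t ⬝ᵥ (A' *ᵥ v t) + u t ⬝ᵥ (A t *ᵥ v')) t := by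
  have hu_i := hasDerivAt_pi.1 hu
  have hv_j := hasDerivAt_pi.1 hv
  have hA_ij (i : ι) (j : κ) : HasDerivAt (fun τ => A τ i j) (A' i j) t :=
    (entryLinearMap ℝ ℝ i j).toContinuousLinearMap.hasFDerivAt.comp_hasDerivAt t hA
  refine (HasDerivAt.fun_sum fun i _ => (hu_i i).fun_mul
    (HasDerivAt.fun_sum fun j _ => (hA_ij i j).fun_mul (hv_j j))).congr_deriv ?_
  simp only [dotProduct, mulVec, mul_add, Finset.sum_add_distrib, Finset.mul_sum, add_assoc]

theorem HasDerivAt.dotProduct_mulVec_of_lyapunov [DecidableEq ι] {Q M₀ : Matrix ι ι ℝ}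
    (hQ : Q * M₀ + M₀ᵀ * Q = -1) {ξ : ℝ → ι → ℝ} {t : ℝ} (hξ : HasDerivAt ξ (M₀ *ᵥ ξ t) t) :
    HasDerivAt (fun τ => ξ τ ⬝ᵥ (Q *ᵥ ξ τ)) (-(ξ t ⬝ᵥ ξ t)) t := by
  convert hξ.dotProduct_mulVec (hasDerivAt_const t Q) hξ using 1
  have hQM₀ : (M₀ *ᵥ ξ t) ⬝ᵥ (Q *ᵥ ξ t) = ξ t ⬝ᵥ ((M₀ᵀ * Q) *ᵥ ξ t) := by
    rw [← mulVec_mulVec, dotProduct_transpose_mulVec, dotProduct_comm]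
  rw [zero_mulVec, dotProduct_zero, add_zero, hQM₀, mulVec_mulVec, ← dotProduct_add,
    ← add_mulVec, add_comm (M₀ᵀ * Q), hQ, neg_mulVec, one_mulVec, dotProduct_neg]

-- `sᵀ Ṁ s = 2 sᵀ C s` by skew-symmetry of `Ṁ - 2C`, which cancels the Coriolis term.
theorem HasDerivAt.dotProduct_mulVec_of_skew {M : ℝ → Matrix ι ι ℝ} {M' C : Matrix ι ι ℝ}
    {s : ℝ → ι → ℝ} {s' f : ι → ℝ} {t : ℝ} (hM : HasDerivAt M M' t) (hMsymm : (M t).IsSymm)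
    (hskew : (M' - 2 • C)ᵀ = -(M' - 2 • C)) (hs : HasDerivAt s s' t)
    (hdyn : M t *ᵥ s' = -(C *ᵥ s t) + f) :
    HasDerivAt (fun τ => s τ ⬝ᵥ (M τ *ᵥ s τ)) (2 * (s t ⬝ᵥ f)) t := by
  convert hs.dotProduct_mulVec hM hs using 1
  have hpass := dotProduct_mulVec_self_eq_zero_of_transpose_eq_neg hskew (s t)
  rw [sub_mulVec, dotProduct_sub, smul_mulVec, dotProduct_smul, nsmul_eq_mul] at hpass
  rw [hMsymm.dotProduct_mulVec_comm s', hdyn, dotProduct_add, dotProduct_neg]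
  push_cast at hpass
  linarith

theorem HasDerivAt.dotProduct_mulVec_of_inv_mulVec [DecidableEq κ] {Λ : Matrix κ κ ℝ}
    (hΛ : Λ.IsSymm) (hΛinv : IsUnit Λ)
    {R : Matrix ι κ ℝ} {s : ι → ℝ} {ω : ℝ → κ → ℝ} {t : ℝ}
    (hω : HasDerivAt ω (Λ⁻¹ *ᵥ (Rᵀ *ᵥ s)) t) :
    HasDerivAt (fun τ => ω τ ⬝ᵥ (Λ *ᵥ ω τ)) (2 * (s ⬝ᵥ (R *ᵥ ω t))) t := by
  convert hω.dotProduct_mulVec (hasDerivAt_const t Λ) hω using 1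
  rw [zero_mulVec, dotProduct_zero, add_zero, hΛ.dotProduct_mulVec_comm _ (ω t), mulVec_mulVec,
    mul_nonsing_inv _ ((isUnit_iff_isUnit_det Λ).1 hΛinv), one_mulVec,
    dotProduct_transpose_mulVec]
  ring

theorem antitoneOn_Ici_of_hasDerivAt_nonpos {f f' : ℝ → ℝ} {a : ℝ}
    (hf : ∀ t ≥ a, HasDerivAt f (f' t) t) (hf' : ∀ t ≥ a, f' t ≤ 0) :
    AntitoneOn f (Set.Ici a) := by
  refine antitoneOn_of_hasDerivWithinAt_nonpos (f' := f') (convex_Ici a)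
    (fun t ht => (hf t ht).continuousAt.continuousWithinAt) (fun t ht => ?_) (fun t ht => ?_)
  all_goals rw [interior_Ici] at ht
  exacts [(hf t ht.le).hasDerivWithinAt, hf' t ht.le]

theorem hasDerivAt_closedLoop_lyapunov [DecidableEq κ] [DecidableEq ν]
    {M : ℝ → Matrix ι ι ℝ} {M' C K : Matrix ι ι ℝ} {B : Matrix ι κ ℝ} {R : Matrix ι ν ℝ}
    {Q M₀ : Matrix κ κ ℝ} {Λ : Matrix ν ν ℝ} {s : ℝ → ι → ℝ} {ξ : ℝ → κ → ℝ} {ω : ℝ → ν → ℝ}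
    {s' : ι → ℝ} {ε t : ℝ}
    (hM : HasDerivAt M M' t) (hMsymm : (M t).IsSymm) (hskew : (M' - 2 • C)ᵀ = -(M' - 2 • C))
    (hQ : Q * M₀ + M₀ᵀ * Q = -1) (hΛ : Λ.IsSymm) (hΛinv : IsUnit Λ)
    (hs : HasDerivAt s s' t) (hsdyn : M t *ᵥ s' = -(C *ᵥ s t) - K *ᵥ s t + B *ᵥ ξ t - R *ᵥ ω t)
    (hξ : HasDerivAt ξ (M₀ *ᵥ ξ t) t) (hω : HasDerivAt ω (Λ⁻¹ *ᵥ (Rᵀ *ᵥ s t)) t) :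
    HasDerivAt (fun τ => ε * (ξ τ ⬝ᵥ (Q *ᵥ ξ τ))
        + (1 / 2) * (s τ ⬝ᵥ (M τ *ᵥ s τ) + ω τ ⬝ᵥ (Λ *ᵥ ω τ)))
      (-ε * (ξ t ⬝ᵥ ξ t) - s t ⬝ᵥ (K *ᵥ s t) + s t ⬝ᵥ (B *ᵥ ξ t)) t := by
  have hξQ := (hξ.dotProduct_mulVec_of_lyapunov hQ).const_mul ε
  have hsM := hM.dotProduct_mulVec_of_skew hMsymm hskew hs
    (f := -(K *ᵥ s t) + B *ᵥ ξ t - R *ᵥ ω t) (by rw [hsdyn]; abel)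
  have hωΛ := hω.dotProduct_mulVec_of_inv_mulVec hΛ hΛinv
  refine (hξQ.fun_add ((hsM.fun_add hωΛ).const_mul (1 / 2))).congr_deriv ?_
  simp only [dotProduct_add, dotProduct_neg, dotProduct_sub]
  ring

theorem AntitoneOn.norm_le_sqrt_of_mul_dotProduct_self_le {F : ℝ → ℝ} {a c : ℝ}
    (hF : AntitoneOn F (Set.Ici a)) {x : ℝ → ι → ℝ} (hc : 0 < c)
    (hx : ∀ t ≥ a, c * (x t ⬝ᵥ x t) ≤ F t) {t : ℝ} (ht : a ≤ t) : ‖x t‖ ≤ √(F a / c) :=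
  (norm_le_sqrt_dotProduct_self (x t)).trans <| Real.sqrt_le_sqrt <|
    (le_div_iff₀ hc).2 (by linarith [hx t ht, hF Set.self_mem_Ici ht ht])

theorem Matrix.two_mul_dotProduct_mulVec_le {K : Matrix ι ι ℝ} {B : Matrix ι κ ℝ} {c b ε : ℝ}
    (hc : 0 < c) (hK : ∀ v, c * (v ⬝ᵥ v) ≤ v ⬝ᵥ (K *ᵥ v))
    (hB : ∀ ξ, (B *ᵥ ξ) ⬝ᵥ (B *ᵥ ξ) ≤ b ^ 2 * (ξ ⬝ᵥ ξ)) (hε : b ^ 2 / c ≤ ε) (s : ι → ℝ)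
    (ξ : κ → ℝ) : 2 * (s ⬝ᵥ (B *ᵥ ξ)) ≤ s ⬝ᵥ (K *ᵥ s) + ε * (ξ ⬝ᵥ ξ) :=
  calc 2 * (s ⬝ᵥ (B *ᵥ ξ)) ≤ c * (s ⬝ᵥ s) + (B *ᵥ ξ) ⬝ᵥ (B *ᵥ ξ) / c :=
        two_mul_dotProduct_le s _ hc
    _ ≤ s ⬝ᵥ (K *ᵥ s) + b ^ 2 / c * (ξ ⬝ᵥ ξ) := by
        rw [div_mul_eq_mul_div]
        exact add_le_add (hK s) (div_le_div_of_nonneg_right (hB ξ) hc.le)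
    _ ≤ s ⬝ᵥ (K *ᵥ s) + ε * (ξ ⬝ᵥ ξ) := by gcongr; exact dotProduct_self_nonneg ξ

theorem Matrix.exists_pos_mul_dotProduct_self_le {A : Matrix ι ι ℝ}
    (hA : ∀ v, v ≠ 0 → 0 < v ⬝ᵥ (A *ᵥ v)) : ∃ c > 0, ∀ v, c * (v ⬝ᵥ v) ≤ v ⬝ᵥ (A *ᵥ v) := by
  rcases isEmpty_or_nonempty ι with hι | ⟨⟨i⟩⟩
  · exact ⟨1, one_pos, fun v => by simp [Subsingleton.elim v 0]⟩
  classical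
  have hscale (r : ℝ) (v : ι → ℝ) : (r • v) ⬝ᵥ (A *ᵥ (r • v)) = r ^ 2 * (v ⬝ᵥ (A *ᵥ v)) := by
    simp only [mulVec_smul, smul_dotProduct, dotProduct_smul, smul_eq_mul]; ring
  -- minimise the form on the compact set `v ⬝ᵥ v = 1` and rescale
  set S := {v : ι → ℝ | v ⬝ᵥ v = 1}
  have hS : IsCompact S := by
    refine Metric.isCompact_of_isClosed_isBounded
      (isClosed_eq (continuous_id.dotProduct continuous_id) continuous_const)
      ((Metric.isBounded_closedBall (x := 0) (r := 1)).subset fun v (hv : v ⬝ᵥ v = 1) => ?_)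
    simpa [hv] using norm_le_sqrt_dotProduct_self v
  have hnormalize (v : ι → ℝ) (hv : v ≠ 0) : (√(v ⬝ᵥ v))⁻¹ • v ∈ S := by
    simp only [S, Set.mem_ofPred_eq, smul_dotProduct, dotProduct_smul, smul_eq_mul, ← mul_assoc,
      ← mul_inv, Real.mul_self_sqrt (dotProduct_self_nonneg v)]
    exact inv_mul_cancel₀ (mt dotProduct_self_eq_zero.1 hv)
  obtain ⟨w, hwS, hwmin⟩ := hS.exists_isMinOn ⟨_, hnormalize (Pi.single i 1) (by simp)⟩
    (f := fun v => v ⬝ᵥ (A *ᵥ v))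
    (continuous_id.dotProduct (continuous_const.matrix_mulVec continuous_id)).continuousOn
  refine ⟨w ⬝ᵥ (A *ᵥ w), hA w fun h => by simp [S, h] at hwS, fun v => ?_⟩
  rcases eq_or_ne v 0 with rfl | hv
  · simp
  have h : w ⬝ᵥ (A *ᵥ w) ≤ _ ⬝ᵥ (A *ᵥ _) := hwmin (hnormalize v hv)
  rw [hscale, inv_pow, Real.sq_sqrt (dotProduct_self_nonneg v)] at h
  rwa [le_inv_mul_iff₀ (lt_of_le_of_ne (dotProduct_self_nonneg v)
    (Ne.symm (mt dotProduct_self_eq_zero.1 hv))), mul_comm] at h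

end

theorem stmt16_general {n m q : ℕ}
    (Mf M' Cf : ℝ → Matrix (Fin n) (Fin n) ℝ)
    (hMderiv : ∀ t : ℝ, HasDerivAt Mf (M' t) t)
    (hMsymm : ∀ t ≥ (0:ℝ), (Mf t).IsSymm)
    (km kM : ℝ) (hkm : 0 < km)
    (hMbd : ∀ t ≥ (0:ℝ), ∀ v : Fin n → ℝ,
      km * (v ⬝ᵥ v) ≤ v ⬝ᵥ (Mf t *ᵥ v) ∧ v ⬝ᵥ (Mf t *ᵥ v) ≤ kM * (v ⬝ᵥ v))
    (hskew : ∀ t ≥ (0:ℝ), (M' t - 2 • Cf t)ᵀ = -(M' t - 2 • Cf t))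
    (K : Matrix (Fin n) (Fin n) ℝ)
    (lamK : ℝ) (hlamK : 0 < lamK)
    (hKpd : ∀ v : Fin n → ℝ, lamK * (v ⬝ᵥ v) ≤ v ⬝ᵥ (K *ᵥ v))
    (Λd : Fin q → ℝ) (hΛd : ∀ i, 0 < Λd i)
    (M₀ : Matrix (Fin m) (Fin m) ℝ)
    (Q : Matrix (Fin m) (Fin m) ℝ)
    (hQpd : ∀ v : Fin m → ℝ, v ≠ 0 → 0 < v ⬝ᵥ (Q *ᵥ v))
    (hQlyap : Q * M₀ + M₀ᵀ * Q = -1)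
    (B : Matrix (Fin n) (Fin m) ℝ) (bB : ℝ)
    (hBop : ∀ ξ : Fin m → ℝ, (B *ᵥ ξ) ⬝ᵥ (B *ᵥ ξ) ≤ bB ^ 2 * (ξ ⬝ᵥ ξ))
    (ε : ℝ) (hε : bB ^ 2 / lamK ≤ ε)
    (ρ : ℝ → Matrix (Fin n) (Fin q) ℝ)
    (s s' : ℝ → Fin n → ℝ) (ξ : ℝ → Fin m → ℝ) (ω : ℝ → Fin q → ℝ)
    (hs : ∀ t ≥ (0:ℝ), HasDerivAt s (s' t) t)
    (hsdyn : ∀ t ≥ (0:ℝ),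
      Mf t *ᵥ s' t = -(Cf t *ᵥ s t) - K *ᵥ s t + B *ᵥ ξ t - ρ t *ᵥ ω t)
    (hξ : ∀ t ≥ (0:ℝ), HasDerivAt ξ (M₀ *ᵥ ξ t) t)
    (hω : ∀ t ≥ (0:ℝ), HasDerivAt ω ((Matrix.diagonal Λd)⁻¹ *ᵥ ((ρ t)ᵀ *ᵥ s t)) t)
    (V : ℝ → ℝ)
    (hV : ∀ t : ℝ, V t = ε * (ξ t ⬝ᵥ (Q *ᵥ ξ t))
      + (1/2) * (s t ⬝ᵥ (Mf t *ᵥ s t) + ω t ⬝ᵥ (Matrix.diagonal Λd *ᵥ ω t))) :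
    (∃ V' : ℝ → ℝ, ∀ t ≥ (0:ℝ), HasDerivAt V (V' t) t ∧
      V' t ≤ -(ε/2) * (ξ t ⬝ᵥ ξ t) - (1/2) * (s t ⬝ᵥ (K *ᵥ s t)) ∧ V' t ≤ 0) ∧
    (∃ Bd : ℝ, ∀ t ≥ (0:ℝ), ‖s t‖ ≤ Bd ∧ ‖ξ t‖ ≤ Bd ∧ ‖ω t‖ ≤ Bd) := by
  have hε₀ : 0 ≤ ε := (div_nonneg (sq_nonneg bB) hlamK.le).trans hε
  have hΛ : (diagonal Λd).PosDef := .diagonal hΛd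
  have hV' : ∀ t ≥ (0:ℝ), HasDerivAt V
      (-ε * (ξ t ⬝ᵥ ξ t) - s t ⬝ᵥ (K *ᵥ s t) + s t ⬝ᵥ (B *ᵥ ξ t)) t := fun t ht => by
    rw [funext hV]
    exact hasDerivAt_closedLoop_lyapunov (hMderiv t) (hMsymm t ht) (hskew t ht) hQlyap
      (isSymm_diagonal Λd) hΛ.isUnit (hs t ht) (hsdyn t ht) (hξ t ht) (hω t ht)
  have hV'_le t : -ε * (ξ t ⬝ᵥ ξ t) - s t ⬝ᵥ (K *ᵥ s t) + s t ⬝ᵥ (B *ᵥ ξ t)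
      ≤ -(ε/2) * (ξ t ⬝ᵥ ξ t) - (1/2) * (s t ⬝ᵥ (K *ᵥ s t)) := by
    linarith [two_mul_dotProduct_mulVec_le hlamK hKpd hBop hε (s t) (ξ t)]
  have hV'_nonpos t :
      -ε * (ξ t ⬝ᵥ ξ t) - s t ⬝ᵥ (K *ᵥ s t) + s t ⬝ᵥ (B *ᵥ ξ t) ≤ 0 := (hV'_le t).trans <| by
    nlinarith [hKpd (s t), dotProduct_self_nonneg (s t), dotProduct_self_nonneg (ξ t)]
  refine ⟨⟨_, fun t ht => ⟨hV' t ht, hV'_le t, hV'_nonpos t⟩⟩, ?_⟩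
  obtain ⟨cQ, hcQ, hQ⟩ := exists_pos_mul_dotProduct_self_le hQpd
  obtain ⟨cΛ, hcΛ, hΛ'⟩ := exists_pos_mul_dotProduct_self_le fun v hv => by
    simpa using hΛ.dotProduct_mulVec_pos hv
  have hV_anti := antitoneOn_Ici_of_hasDerivAt_nonpos hV' fun t _ => hV'_nonpos t
  -- `ε` may vanish, so `V` alone does not bound `ξ`; but `ξᵀ Q ξ` is itself nonincreasing.
  have hξQ_anti := antitoneOn_Ici_of_hasDerivAt_nonpos
    (fun t ht => (hξ t ht).dotProduct_mulVec_of_lyapunov hQlyap)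
    fun t _ => neg_nonpos.2 (dotProduct_self_nonneg (ξ t))
  have hV_lower : ∀ t ≥ (0:ℝ), km / 2 * (s t ⬝ᵥ s t) ≤ V t ∧ cΛ / 2 * (ω t ⬝ᵥ ω t) ≤ V t := by
    intro t ht
    have hεξ : 0 ≤ ε * (ξ t ⬝ᵥ (Q *ᵥ ξ t)) :=
      mul_nonneg hε₀ ((mul_nonneg hcQ.le (dotProduct_self_nonneg _)).trans (hQ _))
    rw [hV t]
    constructor <;> nlinarith [(hMbd t ht (s t)).1, hΛ' (ω t), dotProduct_self_nonneg (s t),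
      dotProduct_self_nonneg (ω t)]
  refine ⟨max √(V 0 / (km / 2)) (max √(ξ 0 ⬝ᵥ (Q *ᵥ ξ 0) / cQ) √(V 0 / (cΛ / 2))),
    fun t ht => ⟨?_, ?_, ?_⟩⟩
  · exact (hV_anti.norm_le_sqrt_of_mul_dotProduct_self_le (half_pos hkm)
      (fun t ht => (hV_lower t ht).1) ht).trans (le_max_left _ _)
  · exact (hξQ_anti.norm_le_sqrt_of_mul_dotProduct_self_le hcQ (fun t _ => hQ (ξ t)) ht).trans
      ((le_max_left _ _).trans (le_max_right _ _))
  · exact (hV_anti.norm_le_sqrt_of_mul_dotProduct_self_le (half_pos hcΛ)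
      (fun t ht => (hV_lower t ht).2) ht).trans ((le_max_right _ _).trans (le_max_right _ _))

/-- Lyapunov analysis of the closed-loop adaptive system:
with V = ε ξ̂ᵀQξ̂ + ½(sᵀM(t)s + ω̃ᵀΛω̃), Q solving QM₀+M₀ᵀQ=−I and
ε ≥ ‖B‖²/λ_min(K), one gets V̇ ≤ −(ε/2)‖ξ̂‖² − ½sᵀKs ≤ 0, hence s, ξ̂, ω̃ bounded. -/
theorem stmt16 {n m p q : ℕ}
    (Mf M' Cf : ℝ → Matrix (Fin n) (Fin n) ℝ)
    (hMderiv : ∀ t : ℝ, HasDerivAt Mf (M' t) t)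
    (hMsymm : ∀ t ≥ (0:ℝ), (Mf t).IsSymm)
    (km kM : ℝ) (hkm : 0 < km)
    (hMbd : ∀ t ≥ (0:ℝ), ∀ v : Fin n → ℝ,
      km * (v ⬝ᵥ v) ≤ v ⬝ᵥ (Mf t *ᵥ v) ∧ v ⬝ᵥ (Mf t *ᵥ v) ≤ kM * (v ⬝ᵥ v))
    (hskew : ∀ t ≥ (0:ℝ), (M' t - 2 • Cf t)ᵀ = -(M' t - 2 • Cf t))
    (K : Matrix (Fin n) (Fin n) ℝ) (hKsymm : K.IsSymm)
    (lamK : ℝ) (hlamK : 0 < lamK)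
    (hKpd : ∀ v : Fin n → ℝ, lamK * (v ⬝ᵥ v) ≤ v ⬝ᵥ (K *ᵥ v))
    (Λd : Fin q → ℝ) (hΛd : ∀ i, 0 < Λd i)
    (M₀ : Matrix (Fin m) (Fin m) ℝ)
    (hHurwitz : ∀ μ : ℂ, (Matrix.charpoly (M₀.map (Complex.ofReal ·))).IsRoot μ → μ.re < 0)
    (Q : Matrix (Fin m) (Fin m) ℝ) (hQsymm : Q.IsSymm)
    (hQpd : ∀ v : Fin m → ℝ, v ≠ 0 → 0 < v ⬝ᵥ (Q *ᵥ v))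
    (hQlyap : Q * M₀ + M₀ᵀ * Q = -1)
    (B : Matrix (Fin n) (Fin m) ℝ) (bB : ℝ) (hbB : 0 ≤ bB)
    (hBop : ∀ ξ : Fin m → ℝ, (B *ᵥ ξ) ⬝ᵥ (B *ᵥ ξ) ≤ bB ^ 2 * (ξ ⬝ᵥ ξ))
    (ε : ℝ) (hε : bB ^ 2 / lamK ≤ ε)
    (ρ : ℝ → Matrix (Fin n) (Fin q) ℝ)
    (hρbd : ∃ Bρ : ℝ, ∀ t ≥ (0:ℝ), ‖ρ t‖ ≤ Bρ)
    (s s' : ℝ → Fin n → ℝ) (ξ : ℝ → Fin m → ℝ) (ω : ℝ → Fin q → ℝ)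
    (hs : ∀ t ≥ (0:ℝ), HasDerivAt s (s' t) t)
    (hsdyn : ∀ t ≥ (0:ℝ),
      Mf t *ᵥ s' t = -(Cf t *ᵥ s t) - K *ᵥ s t + B *ᵥ ξ t - ρ t *ᵥ ω t)
    (hξ : ∀ t ≥ (0:ℝ), HasDerivAt ξ (M₀ *ᵥ ξ t) t)
    (hω : ∀ t ≥ (0:ℝ), HasDerivAt ω ((Matrix.diagonal Λd)⁻¹ *ᵥ ((ρ t)ᵀ *ᵥ s t)) t)
    (V : ℝ → ℝ)
    (hV : ∀ t : ℝ, V t = ε * (ξ t ⬝ᵥ (Q *ᵥ ξ t))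
      + (1/2) * (s t ⬝ᵥ (Mf t *ᵥ s t) + ω t ⬝ᵥ (Matrix.diagonal Λd *ᵥ ω t))) :
    (∃ V' : ℝ → ℝ, ∀ t ≥ (0:ℝ), HasDerivAt V (V' t) t ∧
      V' t ≤ -(ε/2) * (ξ t ⬝ᵥ ξ t) - (1/2) * (s t ⬝ᵥ (K *ᵥ s t)) ∧ V' t ≤ 0) ∧
    (∃ Bd : ℝ, ∀ t ≥ (0:ℝ), ‖s t‖ ≤ Bd ∧ ‖ξ t‖ ≤ Bd ∧ ‖ω t‖ ≤ Bd) :=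
  stmt16_general Mf M' Cf hMderiv hMsymm km kM hkm hMbd hskew K lamK hlamK hKpd Λd hΛd M₀ Q hQpd
    hQlyap B bB hBop ε hε ρ s s' ξ ω hs hsdyn hξ hω V hV
end
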